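/- arXiv:2301.10423 — 5 statements merged into one kernel-verified Lean document; each statement's English description precedes it below -/
import Mathlib

section
/- Let d ≥ 1 and i ∈ {1,…,d}. The σ-algebra generated by the collection R^(i) of rectangular sets in E_d^(i) equals the trace Borel σ-algebra B^(i) = {A Borel in ℝ₊^d : A ⊆ E_d^(i)}. -/
open Set MeasureTheory

/-- Rectangular sets in `E_d^(i)`. -/
def RectSets (d i : ℕ) : Set (Set (Fin d → ℝ)) :=
  {A | ∃ (S : Finset (Fin d)) (x : Fin d → ℝ), i ≤ S.card ∧ (∀ j ∈ S, 0 < x j) ∧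
    A = {z : Fin d → ℝ | (∀ j, 0 ≤ z j) ∧ ∀ j ∈ S, x j < z j}}

/-- The cone `E_d^(i) = {z ∈ ℝ₊^d : z_(i) > 0}`, i.e. at least `i` coordinates positive. -/
def Econe (d i : ℕ) : Set (Fin d → ℝ) :=
  {z | (∀ j, 0 ≤ z j) ∧ ∃ S : Finset (Fin d), S.card = i ∧ ∀ j ∈ S, 0 < z j}

/-- The σ-algebra generated by the rectangular sets equals the trace Borel σ-algebra
on `E_d^(i)`. -/
theorem generateFrom_rectSets_eq_trace_borel (d i : ℕ) (hd : 1 ≤ d) (hi1 : 1 ≤ i)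
    (hid : i ≤ d) :
    MeasurableSpace.generateFrom
        {B : Set (Econe d i) | ∃ A ∈ RectSets d i, B = (Subtype.val : Econe d i → _) ⁻¹' A}
      = (inferInstance : MeasurableSpace (Econe d i)) := by
  set G : Set (Set (Econe d i)) :=
    {B : Set (Econe d i) | ∃ A ∈ RectSets d i, B = (Subtype.val : Econe d i → _) ⁻¹' A} with hG
  apply le_antisymm
  · -- generated σ-algebra ≤ trace Borel
    apply MeasurableSpace.generateFrom_le
    rintro B ⟨A, ⟨S, x, -, -, rfl⟩, rfl⟩
    have hA : MeasurableSet {z : Fin d → ℝ | (∀ j, 0 ≤ z j) ∧ ∀ j ∈ S, x j < z j} := by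
      have : {z : Fin d → ℝ | (∀ j, 0 ≤ z j) ∧ ∀ j ∈ S, x j < z j}
          = (⋂ j, {z : Fin d → ℝ | 0 ≤ z j}) ∩ ⋂ j ∈ S, {z : Fin d → ℝ | x j < z j} := by
        ext z; simp [Set.mem_iInter]
      rw [this]
      exact (MeasurableSet.iInter fun j =>
          measurableSet_le measurable_const (measurable_pi_apply j)).inter
        (MeasurableSet.biInter S.countable_toSet fun j _ =>
          measurableSet_lt measurable_const (measurable_pi_apply j))
    exact hA.preimage measurable_subtype_coe
  · -- trace Borel ≤ generated σ-algebra
    have hval : @Measurable _ _ (MeasurableSpace.generateFrom G) _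
        (Subtype.val : Econe d i → Fin d → ℝ) := by
      refine (@measurable_pi_iff (Econe d i) (Fin d) (fun _ => ℝ)
        (MeasurableSpace.generateFrom G) _ _).mpr fun j => ?_
      refine measurable_of_Ioi (mδ := MeasurableSpace.generateFrom G) fun t => ?_
      rcases lt_or_ge t 0 with ht | ht
      · -- the preimage is everything
        have : (fun z : Econe d i => (z : Fin d → ℝ) j) ⁻¹' Ioi t = univ := by
          ext z
          simpa using lt_of_lt_of_le ht (z.2.1 j)
        rw [this]; exact MeasurableSet.univ
      · -- 0 ≤ t : write as a countable union of rectangular sets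
        have key : (fun z : Econe d i => (z : Fin d → ℝ) j) ⁻¹' Ioi t
            = ⋃ (S : Finset (Fin d)) (_ : S.card = i) (n : ℕ),
              (Subtype.val : Econe d i → _) ⁻¹'
                {z : Fin d → ℝ | (∀ k, 0 ≤ z k) ∧ ∀ k ∈ insert j S,
                  (if k = j then max t (1 / (n + 1 : ℝ)) else 1 / (n + 1 : ℝ)) < z k} := by
          ext ⟨z, hz⟩
          simp only [mem_preimage, mem_Ioi, mem_iUnion, mem_setOf_eq]
          constructor
          · intro hzj
            obtain ⟨hpos, S, hScard, hSpos⟩ := hz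
            have hposins : ∀ k ∈ insert j S, 0 < z k := by
              intro k hk
              rcases Finset.mem_insert.1 hk with rfl | hk
              · exact lt_of_le_of_lt ht hzj
              · exact hSpos k hk
            have hne : j ∈ insert j S := Finset.mem_insert_self j S
            set ε := (insert j S).inf' ⟨j, hne⟩ z with hε
            have hεpos : 0 < ε := by
              rw [hε]
              exact (Finset.lt_inf'_iff _).2 hposins
            obtain ⟨n, hn⟩ := exists_nat_one_div_lt hεpos
            refine ⟨S, hScard, n, hpos, ?_⟩
            intro k hk
            have hkε : ε ≤ z k := Finset.inf'_le _ hk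
            have h1n : (1 : ℝ) / (n + 1) < z k := lt_of_lt_of_le hn hkε
            by_cases hkj : k = j
            · subst hkj
              simp only [if_pos rfl]
              exact max_lt hzj h1n
            · simpa [if_neg hkj] using h1n
          · rintro ⟨S, hScard, n, -, hrect⟩
            have := hrect j (Finset.mem_insert_self j S)
            simp only [if_pos rfl] at this
            exact lt_of_le_of_lt (le_max_left _ _) this
        rw [key]
        refine MeasurableSet.iUnion fun S => MeasurableSet.iUnion fun hS =>
          MeasurableSet.iUnion fun n => ?_
        apply MeasurableSpace.measurableSet_generateFrom
        refine ⟨_, ⟨insert j S, fun k => if k = j then max t (1 / (n + 1 : ℝ))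
          else 1 / (n + 1 : ℝ), ?_, ?_, rfl⟩, rfl⟩
        · rw [hS.symm]; exact Finset.card_le_card (Finset.subset_insert _ _)
        · intro k _
          have h1 : (0 : ℝ) < 1 / (n + 1) := by positivity
          by_cases hkj : k = j
          · simpa [hkj] using lt_of_lt_of_le h1 (le_max_right _ _)
          · simpa [hkj] using h1
    intro s hs
    obtain ⟨A, hA, rfl⟩ := hs
    exact hval hA
end

section
/- Let d ≥ 2, α > 0, and for i ∈ {1,…,d} define α_i* = Σ_{j=1}^{i} (1 − (j−1)/(d+1)) · α · 2^{-(j-1)}. Then for every i ∈ {2,…,d} and every m ∈ {1,…,i−1}, α_m* + α_{i−m}* > α_i*. -/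
/-- The Marshall–Olkin indices with parameters proportional to set cardinality:
`α_i* = Σ_{j=1}^{i} (1 - (j-1)/(d+1)) α 2^{-(j-1)}`. -/
noncomputable def moPropIndex (d : ℕ) (α : ℝ) (i : ℕ) : ℝ :=
  ∑ j ∈ Finset.range i, (1 - (j : ℝ) / ((d : ℝ) + 1)) * α * (2:ℝ) ^ (-(j : ℝ))

/-- For `2 ≤ i ≤ d` and `1 ≤ m ≤ i-1`, `α_m* + α_{i-m}* > α_i*`. -/
theorem marshallOlkin_prop_indices_ineq (d : ℕ) (α : ℝ) (hd : 2 ≤ d) (hα : 0 < α)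
    (i m : ℕ) (hi2 : 2 ≤ i) (hid : i ≤ d) (hm1 : 1 ≤ m) (hmi : m ≤ i - 1) :
    moPropIndex d α m + moPropIndex d α (i - m) > moPropIndex d α i := by
  set f : ℕ → ℝ := fun j => (1 - (j : ℝ) / ((d : ℝ) + 1)) * α * (2:ℝ) ^ (-(j : ℝ)) with hf
  have hmlt : m < i := lt_of_le_of_lt hmi (Nat.sub_lt (by omega) one_pos)
  have hsplit : moPropIndex d α i = moPropIndex d α m + ∑ k ∈ Finset.range (i - m), f (m + k) := by
    have : i = m + (i - m) := by omega
    rw [moPropIndex, this, Finset.sum_range_add, Nat.add_sub_cancel_left]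
    rfl
  rw [hsplit]
  have key : ∑ k ∈ Finset.range (i - m), f (m + k) < moPropIndex d α (i - m) := by
    rw [moPropIndex]
    apply Finset.sum_lt_sum_of_nonempty
    · exact Finset.nonempty_range_iff.mpr (by omega)
    · intro k hk
      simp only [Finset.mem_range] at hk
      have hk' : m + k < i := by omega
      have hcoef : (0:ℝ) < 1 - ((m + k : ℕ) : ℝ) / ((d : ℝ) + 1) := by
        have h1 : ((m + k : ℕ) : ℝ) < (d : ℝ) + 1 := by
          exact_mod_cast Nat.lt_succ_of_lt (lt_of_lt_of_le hk' hid)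
        have hd1 : (0:ℝ) < (d : ℝ) + 1 := by positivity
        rw [sub_pos, div_lt_one hd1]; exact h1
      have hcoef' : 1 - ((m + k : ℕ) : ℝ) / ((d : ℝ) + 1) < 1 - (k : ℝ) / ((d : ℝ) + 1) := by
        have : (k : ℝ) < ((m + k : ℕ) : ℝ) := by exact_mod_cast (by omega : k < m + k)
        have hd1 : (0:ℝ) < (d : ℝ) + 1 := by positivity
        gcongr
      have hpow : (2:ℝ) ^ (-((m + k : ℕ) : ℝ)) < (2:ℝ) ^ (-(k : ℝ)) := by
        apply Real.rpow_lt_rpow_of_exponent_lt one_lt_two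
        have : (k : ℝ) < ((m + k : ℕ) : ℝ) := by exact_mod_cast (by omega : k < m + k)
        linarith
      have hpowpos : (0:ℝ) < (2:ℝ) ^ (-((m + k : ℕ) : ℝ)) := Real.rpow_pos_of_pos two_pos _
      calc f (m + k) = (1 - ((m + k : ℕ) : ℝ) / ((d : ℝ) + 1)) * α * (2:ℝ) ^ (-((m + k : ℕ) : ℝ)) := rfl
        _ < (1 - (k : ℝ) / ((d : ℝ) + 1)) * α * (2:ℝ) ^ (-(k : ℝ)) := by
            apply mul_lt_mul' ?_ hpow (le_of_lt hpowpos) ?_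
            · exact le_of_lt (by nlinarith)
            · nlinarith
  linarith
end

section
/- Let F be a distribution function on ℝ₊ whose tail F̄ = 1−F is regularly varying with index −α < 0 (i.e., for all x > 0, F̄(tx)/F̄(t) → x^{-α} as t → ∞). Let X⁽¹⁾, …, X⁽ⁿ⁾ be i.i.d. with distribution F. Then P(X⁽¹⁾ + … + X⁽ⁿ⁾ > t) / F̄(t) → n as t → ∞. -/
open MeasureTheory Filter ProbabilityTheory Set Topology Finset

/-!
Write `F̄(t) = P(X > t)`. Since `S = X⁽¹⁾ + ⋯ + X⁽ⁿ⁾ ≥ max X⁽ᵏ⁾`, independence gives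
`P(S > t) ≥ 1 - (1 - F̄(t))ⁿ = n F̄(t) (1 + o(1))`. Conversely, for `0 < ε < 1`, if `S > t` then
either one summand exceeds `(1 - ε) t`, or two distinct summands exceed `ε t / n`; hence
`P(S > t) ≤ n F̄((1 - ε) t) + n² F̄(ε t / n)²`. Regular variation turns this into
`limsup P(S > t) / F̄(t) ≤ n (1 - ε)^(-α)`, because the second term is `O(F̄(t)²) = o(F̄(t))`,
and letting `ε → 0` gives the limit `n`.
-/

def IsRegularlyVarying (F : ℝ → ℝ) (ρ : ℝ) : Prop :=
  ∀ x : ℝ, 0 < x → Tendsto (fun t => F (t * x) / F t) atTop (𝓝 (x ^ ρ))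

lemma IsRegularlyVarying.tendsto_sq_comp_mul_div {F : ℝ → ℝ} {ρ : ℝ} (hF : IsRegularlyVarying F ρ)
    (hF0 : Tendsto F atTop (𝓝 0)) {b : ℝ} (hb : 0 < b) :
    Tendsto (fun t => F (t * b) ^ 2 / F t) atTop (𝓝 0) := by
  have hFb : Tendsto (fun t => F (t * b)) atTop (𝓝 0) := hF0.comp (tendsto_id.atTop_mul_const hb)
  simpa [sq, mul_div_right_comm] using (hF b hb).mul hFb

lemma tendsto_one_sub_one_sub_pow_div {β : Type*} {l : Filter β} {F : β → ℝ}
    (hF : Tendsto F l (𝓝 0)) (hF0 : ∀ᶠ x in l, F x ≠ 0) (n : ℕ) :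
    Tendsto (fun x => (1 - (1 - F x) ^ n) / F x) l (𝓝 n) := by
  have h1 : Tendsto (fun x => 1 - F x) l (𝓝 1) := by simpa using tendsto_const_nhds.sub hF
  have hsum := tendsto_finsetSum (range n) fun j _ => h1.pow j
  simp only [one_pow, sum_const, card_range, nsmul_eq_mul, mul_one] at hsum
  refine hsum.congr' (hF0.mono fun x hx => ?_)
  rw [eq_div_iff hx]
  linear_combination -geom_sum_mul (1 - F x) n

lemma tendsto_of_tendsto_of_le_of_family_le {α β γ : Type*} [TopologicalSpace α] [LinearOrder α]
    [OrderTopology α] {l : Filter β} {p : Filter γ} [p.NeBot] {f g : β → α} {u : γ → β → α}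
    {c : γ → α} {L : α} (hg : Tendsto g l (𝓝 L)) (hgf : ∀ᶠ x in l, g x ≤ f x)
    (hc : Tendsto c p (𝓝 L)) (hu : ∀ᶠ i in p, Tendsto (u i) l (𝓝 (c i)) ∧ ∀ᶠ x in l, f x ≤ u i x) :
    Tendsto f l (𝓝 L) := by
  refine tendsto_order.2 ⟨fun a ha => ?_, fun a ha => ?_⟩
  · filter_upwards [hg.eventually (eventually_gt_nhds ha), hgf] with x h1 h2 using h1.trans_le h2
  · obtain ⟨i, hci, hui, hfu⟩ := ((hc.eventually (eventually_lt_nhds ha)).and hu).exists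
    filter_upwards [hui.eventually (eventually_lt_nhds hci), hfu] with x h1 h2 using h2.trans_lt h1

theorem IsRegularlyVarying.tendsto_div_of_le_of_le {F G : ℝ → ℝ} {ρ : ℝ} {n : ℕ} (hn : 0 < n)
    (hF : IsRegularlyVarying F ρ) (hF0 : Tendsto F atTop (𝓝 0)) (hFpos : ∀ t, 0 < F t)
    (hlow : ∀ t, 1 - (1 - F t) ^ n ≤ G t)
    (hup : ∀ ε ∈ Ioo (0 : ℝ) 1, ∀ t > 0,
      G t ≤ n * F (t * (1 - ε)) + n ^ 2 * F (t * (ε / n)) ^ 2) :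
    Tendsto (fun t => G t / F t) atTop (𝓝 n) := by
  have hc : Tendsto (fun ε : ℝ => n * (1 - ε) ^ ρ) (𝓝[>] 0) (𝓝 n) := by
    have h : Tendsto (fun ε : ℝ => (1 - ε) ^ ρ) (𝓝 0) (𝓝 ((1 - 0) ^ ρ)) :=
      (tendsto_const_nhds.sub tendsto_id).rpow_const (by norm_num)
    simpa using (h.const_mul (n : ℝ)).mono_left nhdsWithin_le_nhds
  refine tendsto_of_tendsto_of_le_of_family_le
    (tendsto_one_sub_one_sub_pow_div hF0 (.of_forall fun t => (hFpos t).ne') n)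
    (.of_forall fun t => div_le_div_of_nonneg_right (hlow t) (hFpos t).le) hc
    (u := fun ε t => (n * F (t * (1 - ε)) + n ^ 2 * F (t * (ε / n)) ^ 2) / F t) ?_
  filter_upwards [Ioo_mem_nhdsGT one_pos] with ε hε
  have hlim := ((hF _ (sub_pos.2 hε.2)).const_mul (n : ℝ)).add
    ((hF.tendsto_sq_comp_mul_div hF0 (div_pos hε.1 (Nat.cast_pos.2 hn))).const_mul ((n : ℝ) ^ 2))
  refine ⟨?_, (eventually_gt_atTop 0).mono fun t ht =>
    div_le_div_of_nonneg_right (hup ε hε t ht) (hFpos t).le⟩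
  simpa [add_div, mul_div_assoc] using hlim

lemma tendsto_measureReal_Ioi_atTop_zero (ν : Measure ℝ) [IsFiniteMeasure ν] :
    Tendsto (fun t => ν.real (Ioi t)) atTop (𝓝 0) := by
  have hempty : ⋂ t : ℝ, Ioi t = ∅ :=
    eq_empty_of_forall_notMem fun x hx => lt_irrefl x (mem_iInter.1 hx x)
  have h := tendsto_measure_iInter_atTop (μ := ν) (fun t => measurableSet_Ioi.nullMeasurableSet)
    (fun _ _ hab => Ioi_subset_Ioi hab) ⟨0, measure_ne_top ν _⟩
  rw [hempty, measure_empty] at h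
  exact (ENNReal.tendsto_toReal ENNReal.zero_ne_top).comp h

lemma exists_lt_or_exists_ne_lt_lt_of_lt_sum {ι : Type*} [Fintype ι] {x : ι → ℝ} {b c : ℝ}
    (hb : 0 ≤ b) (hc : 0 ≤ c) (h : b + Fintype.card ι * c < ∑ k, x k) :
    (∃ k, b < x k) ∨ ∃ i j, i ≠ j ∧ c < x i ∧ c < x j := by
  classical
  by_contra! hcon
  obtain ⟨hle, hpair⟩ := hcon
  refine h.not_ge ?_
  by_cases hbig : ∃ i, c < x i
  · obtain ⟨i, hi⟩ := hbig
    have hrest : ∑ k ∈ univ.erase i, x k ≤ Fintype.card ι * c := calc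
      _ ≤ (univ.erase i).card • c :=
        sum_le_card_nsmul _ _ _ fun j hj => hpair i j (ne_of_mem_erase hj).symm hi
      _ ≤ Fintype.card ι * c := by
        rw [nsmul_eq_mul]
        gcongr
        exact_mod_cast card_erase_le
    rw [← add_sum_erase _ _ (mem_univ i)]
    exact add_le_add (hle i) hrest
  · push Not at hbig
    have := sum_le_card_nsmul univ x c fun k _ => hbig k
    rw [nsmul_eq_mul, card_univ] at this
    linarith

section IID

variable {Ω ι : Type*} [MeasurableSpace Ω] {μ : Measure Ω} {X : ι → Ω → ℝ} {ν : Measure ℝ}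

lemma measureReal_lt_and_lt_eq_sq (hindep : iIndepFun X μ) (hlaw : ∀ k, HasLaw (X k) ν μ)
    {i j : ι} (hij : i ≠ j) (c : ℝ) :
    μ.real {ω | c < X i ω ∧ c < X j ω} = ν.real (Ioi c) ^ 2 := by
  have hlaw_Ioi : ∀ k, μ.real (X k ⁻¹' Ioi c) = ν.real (Ioi c) := fun k =>
    (hlaw k).measureReal_eq measurableSet_Ioi
  have h := (hindep.indepFun hij).measure_inter_preimage_eq_mul (Ioi c) (Ioi c)
    measurableSet_Ioi measurableSet_Ioi
  calc μ.real {ω | c < X i ω ∧ c < X j ω}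
      = μ.real (X i ⁻¹' Ioi c) * μ.real (X j ⁻¹' Ioi c) := by
        simp only [measureReal_def, ← ENNReal.toReal_mul, ← h]
        rfl
    _ = _ := by rw [hlaw_Ioi, hlaw_Ioi, sq]

lemma measureReal_lt_sum_le [Fintype ι] [IsFiniteMeasure μ] (hindep : iIndepFun X μ)
    (hlaw : ∀ k, HasLaw (X k) ν μ) {b c : ℝ} (hb : 0 ≤ b) (hc : 0 ≤ c) :
    μ.real {ω | b + Fintype.card ι * c < ∑ k, X k ω} ≤
      Fintype.card ι * ν.real (Ioi b) + Fintype.card ι ^ 2 * ν.real (Ioi c) ^ 2 := by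
  have hsub : {ω | b + Fintype.card ι * c < ∑ k, X k ω} ⊆
      (⋃ k, {ω | b < X k ω}) ∪ ⋃ p : ι × ι, {ω | p.1 ≠ p.2 ∧ c < X p.1 ω ∧ c < X p.2 ω} := by
    intro ω hω
    rcases exists_lt_or_exists_ne_lt_lt_of_lt_sum hb hc hω with ⟨k, hk⟩ | ⟨i, j, hij, hi, hj⟩
    · exact Or.inl (mem_iUnion.2 ⟨k, hk⟩)
    · exact Or.inr (mem_iUnion.2 ⟨(i, j), hij, hi, hj⟩)
  have hone : μ.real (⋃ k, {ω | b < X k ω}) ≤ Fintype.card ι * ν.real (Ioi b) := calc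
    _ ≤ ∑ k, μ.real {ω | b < X k ω} := measureReal_iUnion_fintype_le _
    _ = _ := by simp [(hlaw _).measureReal_eq measurableSet_Ioi, Ioi_def]
  have htwo : μ.real (⋃ p : ι × ι, {ω | p.1 ≠ p.2 ∧ c < X p.1 ω ∧ c < X p.2 ω}) ≤
      Fintype.card ι ^ 2 * ν.real (Ioi c) ^ 2 := calc
    _ ≤ ∑ p : ι × ι, μ.real {ω | p.1 ≠ p.2 ∧ c < X p.1 ω ∧ c < X p.2 ω} :=
      measureReal_iUnion_fintype_le _
    _ ≤ ∑ _p : ι × ι, ν.real (Ioi c) ^ 2 := by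
      refine sum_le_sum fun p _ => ?_
      by_cases hp : p.1 = p.2
      · simp [hp]
      · rw [← measureReal_lt_and_lt_eq_sq hindep hlaw hp c]
        exact measureReal_mono fun ω hω => hω.2
    _ = _ := by simp [sq]
  calc _ ≤ _ := measureReal_mono hsub
    _ ≤ _ := (measureReal_union_le _ _).trans (add_le_add hone htwo)

lemma one_sub_one_sub_pow_le_measureReal_lt_sum [Fintype ι] [IsProbabilityMeasure μ]
    [IsProbabilityMeasure ν] (hnonneg : ∀ k ω, 0 ≤ X k ω) (hindep : iIndepFun X μ)
    (hlaw : ∀ k, HasLaw (X k) ν μ) (t : ℝ) :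
    1 - (1 - ν.real (Ioi t)) ^ Fintype.card ι ≤ μ.real {ω | t < ∑ k, X k ω} := by
  have hall : μ.real {ω | ∀ k, X k ω ≤ t} = (1 - ν.real (Ioi t)) ^ Fintype.card ι := by
    have h := hindep.meas_iInter (s := fun k => X k ⁻¹' Iic t)
      fun k => ⟨Iic t, measurableSet_Iic, rfl⟩
    have hlaw_Iic : ∀ k, μ.real (X k ⁻¹' Iic t) = 1 - ν.real (Ioi t) := fun k => by
      rw [← probReal_compl_eq_one_sub measurableSet_Ioi, compl_Ioi]
      exact (hlaw k).measureReal_eq measurableSet_Iic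
    have hset : {ω | ∀ k, X k ω ≤ t} = ⋂ k, X k ⁻¹' Iic t := by ext; simp
    rw [hset, measureReal_def, h, ENNReal.toReal_prod]
    simp only [← measureReal_def, hlaw_Iic, prod_const, card_univ]
  have hsub : {ω | ∀ k, X k ω ≤ t}ᶜ ⊆ {ω | t < ∑ k, X k ω} := by
    intro ω hω
    obtain ⟨k, hk⟩ : ∃ k, t < X k ω := by simpa using hω
    exact hk.trans_le (single_le_sum (fun j _ => hnonneg j ω) (mem_univ k))
  have hmeas : NullMeasurableSet {ω | ∀ k, X k ω ≤ t} μ := by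
    simp only [ofPred_forall]
    exact .iInter fun k => (hlaw k).aemeasurable.nullMeasurable measurableSet_Iic
  calc _ = μ.real {ω | ∀ k, X k ω ≤ t}ᶜ := by rw [probReal_compl_eq_one_sub₀ hmeas, hall]
    _ ≤ _ := measureReal_mono hsub

end IID

theorem one_large_jump_rv_sum_general
    {Ω : Type*} [MeasurableSpace Ω] (μ : Measure Ω) [IsProbabilityMeasure μ]
    (n : ℕ) (hn : 0 < n) (α : ℝ) (X : Fin n → Ω → ℝ)
    (hmeas : ∀ k, Measurable (X k))
    (hnonneg : ∀ k ω, 0 ≤ X k ω)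
    (hindep : iIndepFun X μ)
    (hident : ∀ k, Measure.map (X k) μ = Measure.map (X ⟨0, hn⟩) μ)
    (hrv : ∀ x : ℝ, 0 < x →
      Tendsto (fun t : ℝ =>
          (μ {ω | t * x < X ⟨0, hn⟩ ω}).toReal / (μ {ω | t < X ⟨0, hn⟩ ω}).toReal)
        atTop (nhds (x ^ (-α))))
    (hpos : ∀ t : ℝ, 0 < (μ {ω | t < X ⟨0, hn⟩ ω}).toReal) :
    Tendsto (fun t : ℝ =>
        (μ {ω | t < ∑ k, X k ω}).toReal / (μ {ω | t < X ⟨0, hn⟩ ω}).toReal)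
      atTop (nhds (n : ℝ)) := by
  set ν := μ.map (X ⟨0, hn⟩)
  have : IsProbabilityMeasure ν := Measure.isProbabilityMeasure_map (hmeas _).aemeasurable
  have hlaw : ∀ k, HasLaw (X k) ν μ := fun k => ⟨(hmeas k).aemeasurable, hident k⟩
  have htail : ∀ t, ν.real (Ioi t) = μ.real {ω | t < X ⟨0, hn⟩ ω} := fun t =>
    map_measureReal_apply (hmeas _) measurableSet_Ioi
  refine IsRegularlyVarying.tendsto_div_of_le_of_le (F := fun t => μ.real {ω | t < X ⟨0, hn⟩ ω})
    (G := fun t => μ.real {ω | t < ∑ k, X k ω}) hn hrv ?_ hpos (fun t => ?_) (fun ε hε t ht => ?_)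
  · simpa only [htail] using tendsto_measureReal_Ioi_atTop_zero ν
  · simpa only [htail, Fintype.card_fin] using
      one_sub_one_sub_pow_le_measureReal_lt_sum hnonneg hindep hlaw t
  · have hsplit : t * (1 - ε) + n * (t * (ε / n)) = t := by field_simp; ring
    have hε' : 0 ≤ t * (ε / n) := by have := hε.1; positivity
    simpa only [htail, Fintype.card_fin, hsplit] using
      measureReal_lt_sum_le hindep hlaw (mul_nonneg ht.le (sub_nonneg.2 hε.2.le)) hε'

/-- One large jump for regularly varying sums: if `X⁽¹⁾,…,X⁽ⁿ⁾` are i.i.d. nonnegative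
with tail `F̄ ∈ RV_{-α}`, then `P(X⁽¹⁾+⋯+X⁽ⁿ⁾ > t)/F̄(t) → n`. -/
theorem one_large_jump_rv_sum
    {Ω : Type*} [MeasurableSpace Ω] (μ : Measure Ω) [IsProbabilityMeasure μ]
    (n : ℕ) (hn : 0 < n) (α : ℝ) (hα : 0 < α) (X : Fin n → Ω → ℝ)
    (hmeas : ∀ k, Measurable (X k))
    (hnonneg : ∀ k ω, 0 ≤ X k ω)
    (hindep : iIndepFun X μ)
    (hident : ∀ k, Measure.map (X k) μ = Measure.map (X ⟨0, hn⟩) μ)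
    (hrv : ∀ x : ℝ, 0 < x →
      Tendsto (fun t : ℝ =>
          (μ {ω | t * x < X ⟨0, hn⟩ ω}).toReal / (μ {ω | t < X ⟨0, hn⟩ ω}).toReal)
        atTop (nhds (x ^ (-α))))
    (hpos : ∀ t : ℝ, 0 < (μ {ω | t < X ⟨0, hn⟩ ω}).toReal) :
    Tendsto (fun t : ℝ =>
        (μ {ω | t < ∑ k, X k ω}).toReal / (μ {ω | t < X ⟨0, hn⟩ ω}).toReal)
      atTop (nhds (n : ℝ)) :=
  one_large_jump_rv_sum_general μ n hn α X hmeas hnonneg hindep hident hrv hpos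
end

section
/- Let X, Y be independent random vectors in ℝ₊^d. Suppose there is a function b(t) → ∞ and a measure μ on E_d^(i)={z: z_(i)>0} such that for every rectangular set A = {z : z_j > x_j ∀ j ∈ S} (S ⊆ {1,…,d}, |S| ≥ i, x_j > 0) with μ(∂A) = 0 one has t·P(X ∈ b(t)A) → μ(A), and suppose E‖Y‖^{α_i+γ} < ∞ for some γ > 0, where b ∈ RV_{1/α_i}. Then for every such μ-continuity rectangular set A, t·P(X + Y ∈ b(t)A) → μ(A) as t → ∞. -/
open MeasureTheory Filter ProbabilityTheory Set Topology

/-!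
On the event `‖Y‖ ≤ ε b(t)`, the event `X + Y ∈ b(t) A` is sandwiched between `X ∈ b(ts) A`
for `s` slightly above and slightly below `1`, because `b(ts)/b(t) → s^{1/α}`. By the scaling
`t ↦ ts`, `t P(X ∈ b(ts) A) → s⁻¹ μ(A)`, which tends to `μ(A)` as `s → 1`. The complementary
event is negligible: by Markov, `t P(‖Y‖ > ε b(t)) ≲ t / b(t)^{α+γ}`, and this tends to `0`
because of the Potter-type lower bound `b(t) ≥ C t^δ`, valid for every `δ < 1/α`.
-/

def rect {ι : Type*} (S : Finset ι) (x : ι → ℝ) : Set (ι → ℝ) := {z | ∀ j ∈ S, x j < z j}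

section Rect

variable {ι Ω : Type*} [Fintype ι] {S : Finset ι} {u u' : ι → ℝ} {δ : ℝ} {X Y : Ω → ι → ℝ}

lemma preimage_rect_subset_add_union (h : ∀ j ∈ S, u' j + δ ≤ u j) :
    X ⁻¹' rect S u ⊆ (X + Y) ⁻¹' rect S u' ∪ {ω | δ < ‖Y ω‖} := by
  intro ω hω
  refine (lt_or_ge δ ‖Y ω‖).elim Or.inr fun hY => Or.inl fun j hj => ?_
  have hYj := abs_le.1 ((Real.norm_eq_abs (Y ω j) ▸ norm_le_pi_norm (Y ω) j).trans hY)
  have hXj : u j < X ω j := hω j hj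
  show u' j < X ω j + Y ω j
  linarith [h j hj]

lemma preimage_add_rect_subset_union (h : ∀ j ∈ S, u' j + δ ≤ u j) :
    (X + Y) ⁻¹' rect S u ⊆ X ⁻¹' rect S u' ∪ {ω | δ < ‖Y ω‖} := by
  intro ω hω
  refine (lt_or_ge δ ‖Y ω‖).elim Or.inr fun hY => Or.inl fun j hj => ?_
  have hYj := abs_le.1 ((Real.norm_eq_abs (Y ω j) ▸ norm_le_pi_norm (Y ω) j).trans hY)
  have hXYj : u j < X ω j + Y ω j := hω j hj
  linarith [h j hj]

end Rect

section Growth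

variable {b : ℝ → ℝ}

lemma mul_pow_le_apply_mul_pow {r s T : ℝ} (hr : 0 ≤ r) (hs : 1 ≤ s) (hT : 0 ≤ T)
    (h : ∀ u ≥ T, r * b u ≤ b (u * s)) (n : ℕ) {u : ℝ} (hu : T ≤ u) :
    r ^ n * b u ≤ b (u * s ^ n) := by
  induction n with
  | zero => simp
  | succ n ih =>
    have hun : T ≤ u * s ^ n := hu.trans (le_mul_of_one_le_right (hT.trans hu) (one_le_pow₀ hs))
    calc r ^ (n + 1) * b u = r * (r ^ n * b u) := by ring
      _ ≤ r * b (u * s ^ n) := mul_le_mul_of_nonneg_left ih hr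
      _ ≤ b (u * s ^ n * s) := h _ hun
      _ = b (u * s ^ (n + 1)) := by rw [pow_succ, mul_assoc]

/-- Iterating `b(ts) ≥ s^δ b(t)` from a window `[T, Ts)` on which `b ≥ 1`. -/
lemma exists_const_mul_rpow_le {s δ : ℝ} (hs : 1 < s) (hδ : 0 ≤ δ)
    (hb : ∀ᶠ t in atTop, 1 ≤ b t) (hgrowth : ∀ᶠ t in atTop, s ^ δ * b t ≤ b (t * s)) :
    ∃ C > 0, ∀ᶠ t in atTop, C * t ^ δ ≤ b t := by
  have hs0 : 0 < s := zero_lt_one.trans hs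
  obtain ⟨T, hT⟩ := eventually_atTop.1 ((hb.and hgrowth).and (eventually_ge_atTop 1))
  have hT0 : 0 < T := zero_lt_one.trans_le (hT T le_rfl).2
  refine ⟨((T * s) ^ δ)⁻¹, by positivity, (eventually_ge_atTop T).mono fun t ht => ?_⟩
  obtain ⟨n, hn, hn'⟩ := exists_nat_pow_near ((one_le_div hT0).2 ht) hs
  have hsn : 0 < s ^ n := by positivity
  have hu : T ≤ t / s ^ n := by rwa [le_div_iff₀ hsn, mul_comm, ← le_div_iff₀ hT0]
  have hiter := mul_pow_le_apply_mul_pow (by positivity) hs.le hT0.le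
    (fun v hv => (hT v hv).1.2) n hu
  rw [div_mul_cancel₀ t hsn.ne'] at hiter
  have ht0 : 0 < t := hT0.trans_le ht
  have hts : t / (T * s) ≤ s ^ n := by
    rw [div_le_iff₀ (by positivity)]
    rw [div_lt_iff₀ hT0, pow_succ] at hn'
    linarith
  calc ((T * s) ^ δ)⁻¹ * t ^ δ = (t / (T * s)) ^ δ := by
        rw [Real.div_rpow (by positivity) (by positivity), inv_mul_eq_div]
    _ ≤ (s ^ n) ^ δ := Real.rpow_le_rpow (by positivity) hts hδ
    _ = (s ^ δ) ^ n := by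
        rw [← Real.rpow_mul_natCast hs0.le, ← Real.rpow_natCast, ← Real.rpow_mul hs0.le, mul_comm]
    _ ≤ (s ^ δ) ^ n * b (t / s ^ n) := le_mul_of_one_le_right (by positivity) (hT _ hu).1.1
    _ ≤ b t := hiter

lemma tendsto_div_rpow_atTop_zero {s ρ p : ℝ} (hs : 1 < s) (hp : 0 < p) (hρ : p⁻¹ < ρ)
    (hbtop : Tendsto b atTop atTop)
    (hbs : Tendsto (fun t => b (t * s) / b t) atTop (𝓝 (s ^ ρ))) :
    Tendsto (fun t => t / b t ^ p) atTop (𝓝 0) := by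
  obtain ⟨δ, hpδ, hδρ⟩ := exists_between hρ
  have hgrowth : ∀ᶠ t in atTop, s ^ δ * b t ≤ b (t * s) := by
    filter_upwards [hbs.eventually_const_lt (Real.rpow_lt_rpow_of_exponent_lt hs hδρ),
      hbtop.eventually_gt_atTop 0] with t ht hbt
    exact ((lt_div_iff₀ hbt).1 ht).le
  obtain ⟨C, hC, hCb⟩ :=
    exists_const_mul_rpow_le hs ((inv_pos.2 hp).trans hpδ).le (hbtop.eventually_ge_atTop 1) hgrowth
  have hexp : 0 < δ * p - 1 := by
    have : 1 < δ * p := by rw [← inv_mul_cancel₀ hp.ne']; gcongr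
    linarith
  have hlim : Tendsto (fun t : ℝ => (C ^ p)⁻¹ * t ^ (-(δ * p - 1))) atTop (𝓝 0) := by
    simpa using (tendsto_rpow_neg_atTop hexp).const_mul (C ^ p)⁻¹
  refine squeeze_zero' ?_ ?_ hlim
  · filter_upwards [eventually_ge_atTop 0, hbtop.eventually_gt_atTop 0] with t ht hbt
    positivity
  · filter_upwards [hCb, eventually_gt_atTop 0] with t hCt ht
    calc t / b t ^ p ≤ t / (C * t ^ δ) ^ p :=
          div_le_div_of_nonneg_left ht.le (by positivity)
            (Real.rpow_le_rpow (by positivity) hCt hp.le)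
      _ = (C ^ p)⁻¹ * t ^ (-(δ * p - 1)) := by
          rw [Real.mul_rpow hC.le (by positivity), ← Real.rpow_mul ht.le, neg_sub,
            Real.rpow_sub ht, Real.rpow_one]
          field_simp

end Growth

lemma tendsto_mul_measureReal_lt_of_integrable_rpow {Ω : Type*} [MeasurableSpace Ω]
    {μ : Measure Ω} [IsFiniteMeasure μ] {f : Ω → ℝ} {b : ℝ → ℝ} {p c : ℝ} (hp : 0 < p)
    (hc : 0 < c) (hf : 0 ≤ f) (hfp : Integrable (fun ω => f ω ^ p) μ)
    (hb : ∀ᶠ t in atTop, 0 < b t) (hbp : Tendsto (fun t => t / b t ^ p) atTop (𝓝 0)) :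
    Tendsto (fun t => t * μ.real {ω | c * b t < f ω}) atTop (𝓝 0) := by
  set M := ∫ ω, f ω ^ p ∂μ
  have hlim := hbp.const_mul (M / c ^ p)
  rw [mul_zero] at hlim
  refine squeeze_zero' ((eventually_ge_atTop 0).mono fun t ht => mul_nonneg ht measureReal_nonneg)
    ?_ hlim
  filter_upwards [eventually_ge_atTop 0, hb] with t ht hbt
  have hcb : 0 < (c * b t) ^ p := by positivity
  have hmarkov : μ.real {ω | c * b t < f ω} ≤ M / (c * b t) ^ p := by
    rw [le_div_iff₀' hcb]
    refine (mul_le_mul_of_nonneg_left (measureReal_mono fun ω hω => ?_) hcb.le).trans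
      (mul_meas_ge_le_integral_of_nonneg (ae_of_all _ fun ω => Real.rpow_nonneg (hf ω) p) hfp _)
    exact Real.rpow_le_rpow (by positivity) (le_of_lt hω) hp.le
  calc t * μ.real {ω | c * b t < f ω} ≤ t * (M / (c * b t) ^ p) :=
        mul_le_mul_of_nonneg_left hmarkov ht
    _ = M / c ^ p * (t / b t ^ p) := by
        rw [Real.mul_rpow hc.le hbt.le]
        field_simp

lemma Filter.Tendsto.mul_comp_mul_const {g : ℝ → ℝ} {L s : ℝ}
    (h : Tendsto (fun t => t * g t) atTop (𝓝 L)) (hs : 0 < s) :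
    Tendsto (fun t => t * g (t * s)) atTop (𝓝 (s⁻¹ * L)) := by
  refine ((h.comp (tendsto_id.atTop_mul_const hs)).const_mul s⁻¹).congr fun t => ?_
  simp only [Function.comp, id]
  field_simp

lemma tendsto_of_forall_bounds {α β : Type*} {l : Filter α} {l₁ l₂ : Filter β} [l₁.NeBot]
    [l₂.NeBot] {g : α → ℝ} {φ : β → ℝ} {L : ℝ}
    (h₁ : Tendsto φ l₁ (𝓝 L)) (h₂ : Tendsto φ l₂ (𝓝 L))
    (hlow : ∀ᶠ s in l₁, ∃ G : α → ℝ, Tendsto G l (𝓝 (φ s)) ∧ ∀ᶠ t in l, G t ≤ g t)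
    (hup : ∀ᶠ s in l₂, ∃ H : α → ℝ, Tendsto H l (𝓝 (φ s)) ∧ ∀ᶠ t in l, g t ≤ H t) :
    Tendsto g l (𝓝 L) := by
  refine tendsto_order.2 ⟨fun c hc => ?_, fun c hc => ?_⟩
  · obtain ⟨s, hcs, G, hG, hGg⟩ := ((h₁.eventually_const_lt hc).and hlow).exists
    filter_upwards [hG.eventually_const_lt hcs, hGg] with t h h' using h.trans_le h'
  · obtain ⟨s, hcs, H, hH, hgH⟩ := ((h₂.eventually_lt_const hc).and hup).exists
    filter_upwards [hH.eventually_lt_const hcs, hgH] with t h h' using h'.trans_lt h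

section Sandwich

variable {ι Ω : Type*} [Fintype ι] [MeasurableSpace Ω] {μ : Measure Ω} [IsFiniteMeasure μ]
  {X Y : Ω → ι → ℝ} {S : Finset ι} {x : ι → ℝ} {b : ℝ → ℝ} {m s q ℓ : ℝ}

lemma exists_lower_bound_measureReal_add_rect (hm : 0 < m) (hmx : ∀ j ∈ S, m ≤ x j)
    (hb : ∀ᶠ t in atTop, 0 < b t) (hbs : Tendsto (fun t => b (t * s) / b t) atTop (𝓝 q))
    (hq : 1 < q)
    (hXs : Tendsto (fun t => t * μ.real (X ⁻¹' rect S (b (t * s) • x))) atTop (𝓝 ℓ))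
    (hY : ∀ c > 0, Tendsto (fun t => t * μ.real {ω | c * b t < ‖Y ω‖}) atTop (𝓝 0)) :
    ∃ G : ℝ → ℝ, Tendsto G atTop (𝓝 ℓ) ∧
      ∀ᶠ t in atTop, G t ≤ t * μ.real ((X + Y) ⁻¹' rect S (b t • x)) := by
  obtain ⟨κ, h1κ, hκq⟩ := exists_between hq
  have hκ : 0 < κ - 1 := sub_pos.2 h1κ
  refine ⟨fun t => t * μ.real (X ⁻¹' rect S (b (t * s) • x)) -
    t * μ.real {ω | (κ - 1) * m * b t < ‖Y ω‖}, by simpa using hXs.sub (hY _ (by positivity)), ?_⟩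
  filter_upwards [hbs.eventually_const_lt hκq, hb, eventually_ge_atTop 0] with t hκt hbt ht
  have hthr : ∀ j ∈ S, (b t • x) j + (κ - 1) * m * b t ≤ (b (t * s) • x) j := fun j hj => by
    have hxj : 0 ≤ x j := hm.le.trans (hmx j hj)
    simp only [Pi.smul_apply, smul_eq_mul]
    linarith [mul_le_mul_of_nonneg_left (hmx j hj) (mul_nonneg hκ.le hbt.le),
      mul_le_mul_of_nonneg_right ((lt_div_iff₀ hbt).1 hκt).le hxj]
  have hunion := (measureReal_mono (μ := μ)
    (preimage_rect_subset_add_union (X := X) (Y := Y) hthr)).trans (measureReal_union_le _ _)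
  rw [sub_le_iff_le_add, ← mul_add]
  exact mul_le_mul_of_nonneg_left hunion ht

lemma exists_upper_bound_measureReal_add_rect (hm : 0 < m) (hmx : ∀ j ∈ S, m ≤ x j)
    (hb : ∀ᶠ t in atTop, 0 < b t) (hbs : Tendsto (fun t => b (t * s) / b t) atTop (𝓝 q))
    (hq : q < 1)
    (hXs : Tendsto (fun t => t * μ.real (X ⁻¹' rect S (b (t * s) • x))) atTop (𝓝 ℓ))
    (hY : ∀ c > 0, Tendsto (fun t => t * μ.real {ω | c * b t < ‖Y ω‖}) atTop (𝓝 0)) :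
    ∃ H : ℝ → ℝ, Tendsto H atTop (𝓝 ℓ) ∧
      ∀ᶠ t in atTop, t * μ.real ((X + Y) ⁻¹' rect S (b t • x)) ≤ H t := by
  obtain ⟨κ, hqκ, hκ1⟩ := exists_between hq
  have hκ : 0 < 1 - κ := sub_pos.2 hκ1
  refine ⟨fun t => t * μ.real (X ⁻¹' rect S (b (t * s) • x)) +
    t * μ.real {ω | (1 - κ) * m * b t < ‖Y ω‖}, by simpa using hXs.add (hY _ (by positivity)), ?_⟩
  filter_upwards [hbs.eventually_lt_const hqκ, hb, eventually_ge_atTop 0] with t hκt hbt ht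
  have hthr : ∀ j ∈ S, (b (t * s) • x) j + (1 - κ) * m * b t ≤ (b t • x) j := fun j hj => by
    have hxj : 0 ≤ x j := hm.le.trans (hmx j hj)
    simp only [Pi.smul_apply, smul_eq_mul]
    linarith [mul_le_mul_of_nonneg_left (hmx j hj) (mul_nonneg hκ.le hbt.le),
      mul_le_mul_of_nonneg_right ((div_lt_iff₀ hbt).1 hκt).le hxj]
  have hunion := (measureReal_mono (μ := μ)
    (preimage_add_rect_subset_union (X := X) (Y := Y) hthr)).trans (measureReal_union_le _ _)
  rw [← mul_add]
  exact mul_le_mul_of_nonneg_left hunion ht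

end Sandwich

theorem heavier_tail_wins_subcone_general
    {Ω : Type*} [MeasurableSpace Ω] (μ : Measure Ω) [IsProbabilityMeasure μ]
    (d i : ℕ)
    (αi γ : ℝ) (hαi : 0 < αi) (hγ : 0 < γ)
    (X Y : Ω → Fin d → ℝ)
    (b : ℝ → ℝ) (hbpos : ∀ t, 0 < b t) (hbtop : Tendsto b atTop atTop)
    (hbrv : ∀ s : ℝ, 0 < s →
      Tendsto (fun t : ℝ => b (t * s) / b t) atTop (nhds (s ^ (αi⁻¹))))
    (μlim : Measure (Fin d → ℝ))
    (hX : ∀ (S : Finset (Fin d)) (x : Fin d → ℝ), i ≤ S.card → (∀ j ∈ S, 0 < x j) →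
      μlim (frontier {z : Fin d → ℝ | ∀ j ∈ S, x j < z j}) = 0 →
      Tendsto (fun t : ℝ => t * (μ {ω | ∀ j ∈ S, b t * x j < X ω j}).toReal)
        atTop (nhds ((μlim {z : Fin d → ℝ | ∀ j ∈ S, x j < z j}).toReal)))
    (hmom : Integrable (fun ω => ‖Y ω‖ ^ (αi + γ)) μ) :
    ∀ (S : Finset (Fin d)) (x : Fin d → ℝ), i ≤ S.card → (∀ j ∈ S, 0 < x j) →
      μlim (frontier {z : Fin d → ℝ | ∀ j ∈ S, x j < z j}) = 0 →
      Tendsto (fun t : ℝ => t * (μ {ω | ∀ j ∈ S, b t * x j < X ω j + Y ω j}).toReal)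
        atTop (nhds ((μlim {z : Fin d → ℝ | ∀ j ∈ S, x j < z j}).toReal)) := by
  intro S x hS hx hfr
  have hb : ∀ᶠ t in atTop, 0 < b t := .of_forall hbpos
  have hXs (s : ℝ) (hs : 0 < s) := (hX S x hS hx hfr).mul_comp_mul_const (g := fun t =>
    μ.real (X ⁻¹' rect S (b t • x))) hs
  have hY : ∀ c > 0, Tendsto (fun t => t * μ.real {ω | c * b t < ‖Y ω‖}) atTop (𝓝 0) :=
    fun c hc => tendsto_mul_measureReal_lt_of_integrable_rpow (by positivity) hc
      (fun ω => norm_nonneg _) hmom hb <| tendsto_div_rpow_atTop_zero one_lt_two (by positivity)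
        (inv_strictAnti₀ hαi (by linarith)) hbtop (hbrv 2 two_pos)
  obtain ⟨m, hmx, hm⟩ := ((S.eventually_all.2 fun j hj =>
    (eventually_le_nhds (hx j hj)).filter_mono nhdsWithin_le_nhds).and
      (self_mem_nhdsWithin (s := Ioi (0 : ℝ)))).exists
  have hφ : Tendsto (fun s : ℝ => s⁻¹ * (μlim (rect S x)).toReal) (𝓝 1)
      (𝓝 (μlim (rect S x)).toReal) := by
    simpa using (tendsto_inv₀ one_ne_zero).mul_const (μlim (rect S x)).toReal
  refine tendsto_of_forall_bounds (l₁ := 𝓝[>] 1) (l₂ := 𝓝[<] 1)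
    (hφ.mono_left nhdsWithin_le_nhds) (hφ.mono_left nhdsWithin_le_nhds) ?_ ?_
  · filter_upwards [self_mem_nhdsWithin] with s (hs : 1 < s)
    exact exists_lower_bound_measureReal_add_rect hm hmx hb (hbrv s (by linarith))
      (Real.one_lt_rpow hs (inv_pos.2 hαi)) (hXs s (by linarith)) hY
  · filter_upwards [Ioo_mem_nhdsLT zero_lt_one] with s ⟨hs0, hs1⟩
    exact exists_upper_bound_measureReal_add_rect hm hmx hb (hbrv s hs0)
      (Real.rpow_lt_one hs0.le hs1 (inv_pos.2 hαi)) (hXs s hs0) hY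

/-- Heavier tail wins on the subcone `E_d^(i)`: if `X` is MRV on `E_d^(i)` (tested on
rectangular continuity sets, with scaling `b ∈ RV_{1/α_i}`) and `Y` is independent with
`E‖Y‖^{α_i+γ} < ∞`, then `X + Y` is MRV on `E_d^(i)` with the same limit measure. -/
theorem heavier_tail_wins_subcone
    {Ω : Type*} [MeasurableSpace Ω] (μ : Measure Ω) [IsProbabilityMeasure μ]
    (d i : ℕ) (hi1 : 1 ≤ i) (hid : i ≤ d)
    (αi γ : ℝ) (hαi : 0 < αi) (hγ : 0 < γ)
    (X Y : Ω → Fin d → ℝ)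
    (hXnn : ∀ ω j, 0 ≤ X ω j)
    (b : ℝ → ℝ) (hbpos : ∀ t, 0 < b t) (hbtop : Tendsto b atTop atTop)
    (hbrv : ∀ s : ℝ, 0 < s →
      Tendsto (fun t : ℝ => b (t * s) / b t) atTop (nhds (s ^ (αi⁻¹))))
    (μlim : Measure (Fin d → ℝ))
    (hX : ∀ (S : Finset (Fin d)) (x : Fin d → ℝ), i ≤ S.card → (∀ j ∈ S, 0 < x j) →
      μlim (frontier {z : Fin d → ℝ | ∀ j ∈ S, x j < z j}) = 0 →
      Tendsto (fun t : ℝ => t * (μ {ω | ∀ j ∈ S, b t * x j < X ω j}).toReal)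
        atTop (nhds ((μlim {z : Fin d → ℝ | ∀ j ∈ S, x j < z j}).toReal)))
    (hmom : Integrable (fun ω => ‖Y ω‖ ^ (αi + γ)) μ)
    (hindep : IndepFun X Y μ) :
    ∀ (S : Finset (Fin d)) (x : Fin d → ℝ), i ≤ S.card → (∀ j ∈ S, 0 < x j) →
      μlim (frontier {z : Fin d → ℝ | ∀ j ∈ S, x j < z j}) = 0 →
      Tendsto (fun t : ℝ => t * (μ {ω | ∀ j ∈ S, b t * x j < X ω j + Y ω j}).toReal)
        atTop (nhds ((μlim {z : Fin d → ℝ | ∀ j ∈ S, x j < z j}).toReal)) :=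
  heavier_tail_wins_subcone_general μ d i αi γ hαi hγ X Y b hbpos hbtop hbrv μlim hX hmom
end

section
/- Suppose Z⁽¹⁾, …, Z⁽ⁿ⁾ are i.i.d. random vectors in ℝ₊^d such that for each j ∈ {1,…,d}, lim_{t→∞} t·P(Z_j⁽¹⁾ > b(t)x) = κ_j x^{-α} for all x > 0, where b ∈ RV_{1/α}, and such that for each subset S ⊆ {1,…,d} with |S| = i ≥ 2, lim_{t→∞} t·P(Z_j⁽¹⁾ > b(t)^{1/i} x_j ∀ j ∈ S) = Π_{j∈S} κ_j x_j^{-α}. Fix S with |S| = i and x_j > 0 for j ∈ S; if the components within each vector are independent, then lim_{t→∞} t·P(Σ_{k=1}^n Z_j⁽ᵏ⁾ > b(t)^{1/i} x_j ∀ j ∈ S) = n^i Π_{j∈S} κ_j x_j^{-α}. -/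
/-!
Write `c t = b(t)^{1/i}` and `F_j s = P(Z_j > s)`. Independence of the components factors the
joint exceedance probabilities, both of a single vector and of the componentwise sums, so the
hypotheses say `t ∏_{j ∈ S} F_j (c t y_j) → ∏_{j ∈ S} κ_j y_j^{-α}` for every positive `y`, and
the claim is about `t ∏_{j ∈ S} P(∑_k Z_j⁽ᵏ⁾ > c t x_j)`.

In one coordinate, the sum of `n` independent nonnegative copies exceeds `a` as soon as one
summand does, which has probability at least `n F a - (n F a)²`; and it exceeds `a` only if one
summand exceeds `(1 - ε) a` or two exceed `ε a / n`, which has probability at most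
`n F ((1 - ε) a) + n² F (ε a / n)²`. Expanding the product over `j ∈ S` of either bound, every
term carrying a squared factor is some `t ∏_{j ∈ S} F_j (c t y_j)`, which converges, times a
tail `F_j → 0`. Hence the product is squeezed between quantities tending to
`n^i ∏_{j ∈ S} κ_j x_j^{-α}` and `n^i ∏_{j ∈ S} κ_j ((1 - ε) x_j)^{-α}`, and `ε → 0` concludes.
-/

open MeasureTheory Filter ProbabilityTheory Topology

theorem one_sub_pow_le_one_sub_mul_add_sq (n : ℕ) {p : ℝ} (h0 : 0 ≤ p) (h1 : p ≤ 1) :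
    (1 - p) ^ n ≤ 1 - n * p + (n * p) ^ 2 := by
  induction n with
  | zero => simp
  | succ m ih =>
    have hm : (0 : ℝ) ≤ m := m.cast_nonneg
    rw [pow_succ]
    push_cast
    nlinarith [mul_le_mul_of_nonneg_right ih (sub_nonneg.2 h1), mul_nonneg hm h0,
      mul_nonneg (mul_nonneg hm h0) (mul_nonneg h0 h0)]

theorem exists_lt_or_exists_ne_lt_of_lt_sum {ι : Type*} [Fintype ι] [Nonempty ι] {v : ι → ℝ}
    (hv : ∀ i, 0 ≤ v i) {a δ : ℝ} (hδ : 0 ≤ δ) (h : a < ∑ i, v i) :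
    (∃ i, a - Fintype.card ι * δ < v i) ∨ ∃ i j, i ≠ j ∧ δ < v i ∧ δ < v j := by
  classical
  by_contra! hcon
  obtain ⟨hsmall, hpair⟩ := hcon
  obtain ⟨i₀⟩ := ‹Nonempty ι›
  by_cases hbig : ∃ k, δ < v k
  · obtain ⟨k, hk⟩ := hbig
    have hle : ∀ i, v i ≤ δ + if i = k then v k - δ else 0 := by
      intro i
      split_ifs with hik
      · simp [hik]
      · simpa using hpair k i (Ne.symm hik) hk
    have := Finset.sum_le_sum fun i (_ : i ∈ Finset.univ) => hle i
    simp only [Finset.sum_add_distrib, Finset.sum_ite_eq', Finset.mem_univ, if_true,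
      Finset.sum_const, Finset.card_univ, nsmul_eq_mul] at this
    linarith [hsmall k]
  · push Not at hbig
    have := Finset.sum_le_sum fun i (_ : i ∈ Finset.univ) => hbig i
    simp only [Finset.sum_const, Finset.card_univ, nsmul_eq_mul] at this
    linarith [hsmall i₀, hv i₀]

theorem tendsto_of_lower_of_upper_family {α β : Type*} {l : Filter α} {p : Filter β}
    [p.NeBot] {h lo : α → ℝ} {U : β → ℝ} {L : ℝ}
    (hlo : Tendsto lo l (𝓝 L)) (hle : lo ≤ᶠ[l] h) (hU : Tendsto U p (𝓝 L))
    (hup : ∀ᶠ ε in p, ∃ u : α → ℝ, Tendsto u l (𝓝 (U ε)) ∧ h ≤ᶠ[l] u) :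
    Tendsto h l (𝓝 L) := by
  refine tendsto_order.2 ⟨fun q hq => ?_, fun q hq => ?_⟩
  · filter_upwards [hlo.eventually (lt_mem_nhds hq), hle] with t ht hlt using ht.trans_le hlt
  · obtain ⟨ε, hεq, u, hu, hhu⟩ := ((hU.eventually (gt_mem_nhds hq)).and hup).exists
    filter_upwards [hu.eventually (gt_mem_nhds hεq), hhu] with t ht hlt using hlt.trans_lt ht

theorem tendsto_prod_mul_rpow_one_sub_mul {ι : Type*} (S : Finset ι) (κ x : ι → ℝ) (r : ℝ)
    (hx : ∀ j ∈ S, x j ≠ 0) :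
    Tendsto (fun ε : ℝ => ∏ j ∈ S, κ j * ((1 - ε) * x j) ^ r) (𝓝 0)
      (𝓝 (∏ j ∈ S, κ j * x j ^ r)) := by
  have : ContinuousAt (fun ε : ℝ => ∏ j ∈ S, κ j * ((1 - ε) * x j) ^ r) 0 :=
    tendsto_finsetProd _ fun j hj => continuousAt_const.mul
      ((Real.continuousAt_rpow_const _ _ (Or.inl (by simpa using hx j hj))).comp (by fun_prop))
  simpa using this.tendsto

section ProductLimits

variable {α ι : Type*} {l : Filter α} {w : α → ℝ} {S : Finset ι} {A : ℝ}

theorem tendsto_mul_prod_add_mul [DecidableEq ι] {f g e : ι → α → ℝ}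
    (hf : Tendsto (fun t => w t * ∏ j ∈ S, f j t) l (𝓝 A))
    (hmix : ∀ T ⊂ S, ∃ B,
      Tendsto (fun t => w t * ((∏ j ∈ T, f j t) * ∏ j ∈ S \ T, g j t)) l (𝓝 B))
    (he : ∀ j ∈ S, Tendsto (e j) l (𝓝 0)) :
    Tendsto (fun t => w t * ∏ j ∈ S, (f j t + g j t * e j t)) l (𝓝 A) := by
  choose! B hB using hmix
  have hexpand : ∀ t, w t * ∏ j ∈ S, (f j t + g j t * e j t) = w t * ∏ j ∈ S, f j t +
      ∑ T ∈ S.powerset.erase S,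
        w t * ((∏ j ∈ T, f j t) * ∏ j ∈ S \ T, g j t) * ∏ j ∈ S \ T, e j t := by
    intro t
    rw [Finset.prod_add, ← Finset.add_sum_erase _ _ (Finset.mem_powerset_self S),
      Finset.sdiff_self, Finset.prod_empty, mul_one, mul_add, Finset.mul_sum]
    congr 1
    refine Finset.sum_congr rfl fun T _ => ?_
    rw [Finset.prod_mul_distrib]
    ring
  simp_rw [hexpand]
  rw [← add_zero A]
  refine hf.add ?_
  rw [← Finset.sum_const_zero (s := S.powerset.erase S)]
  refine tendsto_finsetSum _ fun T hT => ?_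
  obtain ⟨hTS, hTsub⟩ : T ≠ S ∧ T ⊆ S := by simpa using hT
  obtain ⟨j, hj⟩ : (S \ T).Nonempty :=
    Finset.sdiff_nonempty.2 fun hST => hTS (hTsub.antisymm hST)
  have := (hB T (Finset.ssubset_iff_subset_ne.2 ⟨hTsub, hTS⟩)).mul
    (tendsto_finsetProd (S \ T) fun j hj => he j (Finset.sdiff_subset hj))
  rwa [Finset.prod_eq_zero hj rfl, mul_zero] at this

theorem tendsto_mul_prod_mul_sub_sq {f : ι → α → ℝ} (n : ℝ)
    (hf : Tendsto (fun t => w t * ∏ j ∈ S, f j t) l (𝓝 A))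
    (hf0 : ∀ j ∈ S, Tendsto (f j) l (𝓝 0)) :
    Tendsto (fun t => w t * ∏ j ∈ S, (n * f j t - (n * f j t) ^ 2)) l
      (𝓝 (n ^ S.card * A)) := by
  classical
  have hexp : ∀ t, w t * ∏ j ∈ S, (n * f j t - (n * f j t) ^ 2) =
      n ^ S.card * (w t * ∏ j ∈ S, (f j t + f j t * -(n * f j t))) := by
    intro t
    rw [mul_left_comm, ← Finset.prod_const, ← Finset.prod_mul_distrib]
    congr 2 with j
    ring
  simp_rw [hexp]
  refine (tendsto_mul_prod_add_mul hf (fun T hT => ⟨A, ?_⟩) fun j hj => ?_).const_mul _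
  · simpa only [mul_comm (∏ j ∈ T, f j _), Finset.prod_sdiff hT.subset] using hf
  · simpa using ((hf0 j hj).const_mul n).neg

theorem tendsto_mul_prod_mul_add_sq {H : ι → ℝ → α → ℝ} {Λ : (ι → ℝ) → ℝ} (n : ℝ)
    (hlim : ∀ y : ι → ℝ, (∀ j ∈ S, 0 < y j) →
      Tendsto (fun t => w t * ∏ j ∈ S, H j (y j) t) l (𝓝 (Λ y)))
    {x₁ x₂ : ι → ℝ} (hx₁ : ∀ j ∈ S, 0 < x₁ j) (hx₂ : ∀ j ∈ S, 0 < x₂ j)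
    (hH : ∀ j ∈ S, Tendsto (H j (x₂ j)) l (𝓝 0)) :
    Tendsto (fun t => w t * ∏ j ∈ S, (n * H j (x₁ j) t + n ^ 2 * H j (x₂ j) t ^ 2)) l
      (𝓝 (n ^ S.card * Λ x₁)) := by
  classical
  have hexp : ∀ t, w t * ∏ j ∈ S, (n * H j (x₁ j) t + n ^ 2 * H j (x₂ j) t ^ 2) =
      n ^ S.card *
        (w t * ∏ j ∈ S, (H j (x₁ j) t + H j (x₂ j) t * (n * H j (x₂ j) t))) := by
    intro t
    rw [mul_left_comm, ← Finset.prod_const, ← Finset.prod_mul_distrib]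
    congr 2 with j
    ring
  simp_rw [hexp]
  refine (tendsto_mul_prod_add_mul (hlim x₁ hx₁)
    (fun T hT => ⟨Λ (T.piecewise x₁ x₂), ?_⟩) fun j hj => ?_).const_mul _
  · have hy : ∀ j ∈ S, 0 < T.piecewise x₁ x₂ j := fun j hj => by
      by_cases hjT : j ∈ T <;> simp [hjT, hx₁ j hj, hx₂ j hj]
    refine (hlim _ hy).congr fun t => ?_
    have := Finset.prod_piecewise S T (fun j => H j (x₁ j) t) (fun j => H j (x₂ j) t)
    rw [Finset.inter_eq_right.2 hT.subset] at this
    rw [← this]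
    congr 2 with j
    by_cases hjT : j ∈ T <;> simp [hjT]
  · simpa using (hH j hj).const_mul n

end ProductLimits

theorem tendsto_mul_prod_of_tail_bounds {ι : Type*} (S : Finset ι) {n : ℕ} (hn : 0 < n)
    {x : ι → ℝ} (hx : ∀ j ∈ S, 0 < x j) {c : ℝ → ℝ} (hc : Tendsto c atTop atTop)
    {F G : ι → ℝ → ℝ} {Λ : (ι → ℝ) → ℝ}
    (hF_nonneg : ∀ j ∈ S, ∀ s, 0 ≤ F j s) (hF : ∀ j ∈ S, Tendsto (F j) atTop (𝓝 0))
    (hlim : ∀ y : ι → ℝ, (∀ j ∈ S, 0 < y j) →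
      Tendsto (fun t => t * ∏ j ∈ S, F j (c t * y j)) atTop (𝓝 (Λ y)))
    (hΛ : Tendsto (fun ε => Λ fun j => (1 - ε) * x j) (𝓝[>] 0) (𝓝 (Λ x)))
    (hlow : ∀ j ∈ S, ∀ s, n * F j s - (n * F j s) ^ 2 ≤ G j s)
    (hup : ∀ j ∈ S, ∀ s δ, 0 ≤ δ → G j s ≤ n * F j (s - n * δ) + n ^ 2 * F j δ ^ 2) :
    Tendsto (fun t => t * ∏ j ∈ S, G j (c t * x j)) atTop (𝓝 (n ^ S.card * Λ x)) := by
  classical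
  have hFc : ∀ j ∈ S, ∀ y, 0 < y → Tendsto (fun t => F j (c t * y)) atTop (𝓝 0) :=
    fun j hj y hy => (hF j hj).comp (hc.atTop_mul_const hy)
  have hlower_nonneg : ∀ᶠ t in atTop, ∀ j ∈ S,
      0 ≤ n * F j (c t * x j) - (n * F j (c t * x j)) ^ 2 := by
    refine (Finset.eventually_all S).2 fun j hj => ?_
    have := (hFc j hj _ (hx j hj)).const_mul (n : ℝ)
    rw [mul_zero] at this
    filter_upwards [this.eventually (eventually_le_nhds one_pos)] with t ht
    nlinarith [mul_nonneg (Nat.cast_nonneg n) (hF_nonneg j hj (c t * x j))]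
  refine tendsto_of_lower_of_upper_family (p := 𝓝[>] (0 : ℝ))
    (tendsto_mul_prod_mul_sub_sq (n : ℝ) (hlim x hx) fun j hj => hFc j hj _ (hx j hj)) ?_
    (hΛ.const_mul _) ?_
  · filter_upwards [hlower_nonneg, eventually_ge_atTop 0] with t ht ht0
    exact mul_le_mul_of_nonneg_left (Finset.prod_le_prod ht fun j hj => hlow j hj _) ht0
  · filter_upwards [Ioo_mem_nhdsGT one_pos] with ε ⟨hε0, hε1⟩
    set x₁ : ι → ℝ := fun j => (1 - ε) * x j
    set x₂ : ι → ℝ := fun j => ε * x j / n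
    have hx₂ : ∀ j ∈ S, 0 < x₂ j := fun j hj => by have := hx j hj; positivity
    refine ⟨_, tendsto_mul_prod_mul_add_sq (H := fun j y t => F j (c t * y)) (n : ℝ) hlim
      (x₁ := x₁) (fun j hj => by have := hx j hj; positivity) hx₂
      (fun j hj => hFc j hj _ (hx₂ j hj)), ?_⟩
    filter_upwards [hlower_nonneg, eventually_ge_atTop 0, hc.eventually_ge_atTop 0]
      with t ht ht0 hct
    refine mul_le_mul_of_nonneg_left (Finset.prod_le_prod
      (fun j hj => (ht j hj).trans (hlow j hj _)) fun j hj => ?_) ht0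
    have hδ : 0 ≤ c t * x₂ j := by have := hx j hj; positivity
    have harg : c t * x j - n * (c t * x₂ j) = c t * x₁ j := by
      simp only [x₁, x₂]
      field_simp
    simpa only [harg] using hup j hj (c t * x j) _ hδ

section Probability

variable {Ω : Type*} [MeasurableSpace Ω] {μ : Measure Ω}

theorem iIndepFun_curry {ι κ 𝓧 : Type*} [MeasurableSpace 𝓧] {Y : ι × κ → Ω → 𝓧}
    (hY : ∀ p, Measurable (Y p)) (h : iIndepFun Y μ) :
    iIndepFun (fun i ω j => Y (i, j) ω) μ := by
  have := h.isProbabilityMeasure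
  have : ∀ p, IsProbabilityMeasure (μ.map (Y p)) := fun p =>
    Measure.isProbabilityMeasure_map (hY p).aemeasurable
  have hrow : ∀ i, μ.map (fun ω j => Y (i, j) ω) =
      Measure.infinitePi fun j => μ.map (Y (i, j)) :=
    fun i => (h.precomp (Prod.mk_right_injective i)).map_fun_eq_infinitePi_map fun j => hY _
  rw [iIndepFun_iff_map_fun_eq_infinitePi_map (fun i => by fun_prop), funext hrow,
    ← Measure.infinitePi_map_curry, ← h.map_fun_eq_infinitePi_map hY,
    Measure.map_map (by fun_prop) (by fun_prop)]
  rfl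

theorem iIndepFun_transpose {ι κ 𝓧 : Type*} [MeasurableSpace 𝓧] {X : ι → κ → Ω → 𝓧}
    (hX : ∀ i j, Measurable (X i j))
    (h : iIndepFun (fun i ω j => X i j ω) μ) (hrow : ∀ i, iIndepFun (X i) μ) :
    iIndepFun (fun j ω i => X i j ω) μ :=
  iIndepFun_curry (fun p => hX p.2 p.1)
    ((iIndepFun_uncurry' hX h hrow).precomp Prod.swap_injective)

theorem iIndepFun_sum_apply {ι κ : Type*} [Fintype ι] {X : ι → Ω → κ → ℝ}
    (hX : ∀ i, Measurable (X i)) (h : iIndepFun X μ)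
    (hrow : ∀ i, iIndepFun (fun j ω => X i ω j) μ) :
    iIndepFun (fun j ω => ∑ i, X i ω j) μ :=
  (iIndepFun_transpose (X := fun i j ω => X i ω j)
    (fun i j => (measurable_pi_apply j).comp (hX i)) h hrow).comp
    (fun _ v => ∑ i, v i) fun _ => by fun_prop

theorem ProbabilityTheory.iIndepFun.measureReal_forall_lt {ι : Type*} {Y : ι → Ω → ℝ}
    (hY : iIndepFun Y μ) (S : Finset ι) (a : ι → ℝ) :
    μ.real {ω | ∀ j ∈ S, a j < Y j ω} = ∏ j ∈ S, μ.real {ω | a j < Y j ω} := by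
  have hset : {ω | ∀ j ∈ S, a j < Y j ω} = ⋂ j ∈ S, Y j ⁻¹' Set.Ioi (a j) := by
    ext ω
    simp
  rw [hset, measureReal_def, hY.meas_biInter fun j _ => ⟨_, measurableSet_Ioi, rfl⟩,
    ENNReal.toReal_prod]
  rfl

theorem tendsto_measureReal_lt_atTop [IsFiniteMeasure μ] {f : Ω → ℝ} (hf : Measurable f) :
    Tendsto (fun s => μ.real {ω | s < f ω}) atTop (𝓝 0) := by
  have hempty : ⋂ s : ℝ, f ⁻¹' Set.Ioi s = ∅ :=
    Set.eq_empty_of_forall_notMem fun ω hω => lt_irrefl (f ω) (Set.mem_iInter.1 hω (f ω))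
  have := tendsto_measure_iInter_atTop (μ := μ)
    (fun s => (hf measurableSet_Ioi).nullMeasurableSet)
    (fun s s' hss' ω (hω : s' < f ω) => hss'.trans_lt hω) ⟨0, measure_ne_top μ _⟩
  rw [hempty, measure_empty] at this
  exact ENNReal.toReal_zero ▸ (ENNReal.tendsto_toReal ENNReal.zero_ne_top).comp this

theorem measureReal_lt_apply_eq_of_map_eq {ι : Type*} {Y Y' : Ω → ι → ℝ} (hY : Measurable Y)
    (hY' : Measurable Y') (h : μ.map Y = μ.map Y') (j : ι) (s : ℝ) :
    μ.real {ω | s < Y ω j} = μ.real {ω | s < Y' ω j} := by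
  have hB : MeasurableSet {v : ι → ℝ | s < v j} := measurable_pi_apply j measurableSet_Ioi
  have := congrArg (fun ν : Measure (ι → ℝ) => ν.real {v | s < v j}) h
  simp only [map_measureReal_apply hY hB, map_measureReal_apply hY' hB] at this
  exact this

theorem tendsto_mul_prod_measureReal_lt {ι : Type*} {Y : Ω → ι → ℝ}
    (hY : iIndepFun (fun j ω => Y ω j) μ) {b : ℝ → ℝ} {κ : ι → ℝ} {α : ℝ}
    (hmarg : ∀ j x, 0 < x →
      Tendsto (fun t => t * μ.real {ω | b t * x < Y ω j}) atTop (𝓝 (κ j * x ^ (-α))))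
    (hjoint : ∀ S : Finset ι, 2 ≤ S.card → ∀ x : ι → ℝ, (∀ j ∈ S, 0 < x j) →
      Tendsto (fun t => t * μ.real {ω | ∀ j ∈ S, b t ^ (S.card : ℝ)⁻¹ * x j < Y ω j}) atTop
        (𝓝 (∏ j ∈ S, κ j * x j ^ (-α))))
    {S : Finset ι} (hS : S.Nonempty) {x : ι → ℝ} (hx : ∀ j ∈ S, 0 < x j) :
    Tendsto (fun t => t * ∏ j ∈ S, μ.real {ω | b t ^ (S.card : ℝ)⁻¹ * x j < Y ω j}) atTop
      (𝓝 (∏ j ∈ S, κ j * x j ^ (-α))) := by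
  rcases (Finset.one_le_card.2 hS).eq_or_lt with hcard | hcard
  · obtain ⟨j, rfl⟩ := Finset.card_eq_one.1 hcard.symm
    simpa using hmarg j (x j) (hx j (Finset.mem_singleton_self j))
  · exact (hjoint S hcard x hx).congr fun t => congrArg (t * ·) (hY.measureReal_forall_lt S _)

variable {ι : Type*} [Fintype ι] [Nonempty ι] {X : ι → Ω → ℝ} {G : ℝ → ℝ}

theorem mul_sub_sq_le_measureReal_lt_sum (hX : ∀ i, Measurable (X i)) (hind : iIndepFun X μ)
    (hnonneg : ∀ i ω, 0 ≤ X i ω) (hG : ∀ i s, μ.real {ω | s < X i ω} = G s) (a : ℝ) :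
    Fintype.card ι * G a - (Fintype.card ι * G a) ^ 2 ≤ μ.real {ω | a < ∑ i, X i ω} := by
  have := hind.isProbabilityMeasure
  have hsub : ⋃ i, {ω | a < X i ω} ⊆ {ω | a < ∑ i, X i ω} := by
    simp only [Set.iUnion_subset_iff]
    exact fun i ω hω => hω.trans_le
      (Finset.single_le_sum (fun k _ => hnonneg k ω) (Finset.mem_univ i))
  have hA : ∀ i, MeasurableSet {ω | a < X i ω} := fun i => hX i measurableSet_Ioi
  have hnone : μ.real (⋂ i, {ω | a < X i ω}ᶜ) = (1 - G a) ^ Fintype.card ι := by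
    have hprod : μ (⋂ i, {ω | a < X i ω}ᶜ) = ∏ i, μ {ω | a < X i ω}ᶜ :=
      hind.meas_iInter fun i => ⟨(Set.Ioi a)ᶜ, measurableSet_Ioi.compl, rfl⟩
    calc μ.real (⋂ i, {ω | a < X i ω}ᶜ) = ∏ i, μ.real {ω | a < X i ω}ᶜ := by
          rw [measureReal_def, hprod, ENNReal.toReal_prod]; rfl
      _ = (1 - G a) ^ Fintype.card ι := by
          simp only [probReal_compl_eq_one_sub (hA _), hG, Finset.prod_const, Finset.card_univ]
  have hGle : G a ≤ 1 := hG (Classical.arbitrary ι) a ▸ measureReal_le_one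
  calc _ ≤ 1 - (1 - G a) ^ Fintype.card ι := by
        linarith [one_sub_pow_le_one_sub_mul_add_sq (Fintype.card ι)
          (hG (Classical.arbitrary ι) a ▸ measureReal_nonneg) hGle]
    _ = μ.real (⋃ i, {ω | a < X i ω}) := by
        rw [← hnone, ← Set.compl_iUnion, probReal_compl_eq_one_sub (MeasurableSet.iUnion hA),
          sub_sub_cancel]
    _ ≤ _ := measureReal_mono hsub

theorem measureReal_lt_sum_le_s9 (hind : iIndepFun X μ) (hnonneg : ∀ i ω, 0 ≤ X i ω)
    (hG : ∀ i s, μ.real {ω | s < X i ω} = G s) {δ : ℝ} (hδ : 0 ≤ δ) (a : ℝ) :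
    μ.real {ω | a < ∑ i, X i ω} ≤
      Fintype.card ι * G (a - Fintype.card ι * δ) + Fintype.card ι ^ 2 * G δ ^ 2 := by
  classical
  have := hind.isProbabilityMeasure
  set one_large := ⋃ i, {ω | a - Fintype.card ι * δ < X i ω}
  set two_large :=
    ⋃ p ∈ (Finset.univ : Finset ι).offDiag, {ω | δ < X p.1 ω} ∩ {ω | δ < X p.2 ω}
  have hsub : {ω | a < ∑ i, X i ω} ⊆ one_large ∪ two_large := by
    intro ω hω
    rcases exists_lt_or_exists_ne_lt_of_lt_sum (hnonneg · ω) hδ hω with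
      ⟨i, hi⟩ | ⟨i, j, hij, hi, hj⟩
    · exact Or.inl (Set.mem_iUnion.2 ⟨i, hi⟩)
    · exact Or.inr (Set.mem_biUnion (x := (i, j)) (by simpa using hij) ⟨hi, hj⟩)
  have hpair : ∀ p ∈ (Finset.univ : Finset ι).offDiag,
      μ.real ({ω | δ < X p.1 ω} ∩ {ω | δ < X p.2 ω}) = G δ ^ 2 := by
    intro p hp
    have hne : p.1 ≠ p.2 := (Finset.mem_offDiag.1 hp).2.2
    have : μ ({ω | δ < X p.1 ω} ∩ {ω | δ < X p.2 ω}) =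
        μ {ω | δ < X p.1 ω} * μ {ω | δ < X p.2 ω} :=
      (indepFun_iff_measure_inter_preimage_eq_mul.1 (hind.indepFun hne))
        (Set.Ioi δ) (Set.Ioi δ) measurableSet_Ioi measurableSet_Ioi
    rw [measureReal_def, this, ENNReal.toReal_mul, ← measureReal_def, ← measureReal_def]
    exact (congrArg₂ (· * ·) (hG p.1 δ) (hG p.2 δ)).trans (sq (G δ)).symm
  have hone : μ.real one_large ≤ Fintype.card ι * G (a - Fintype.card ι * δ) :=
    (measureReal_iUnion_fintype_le _).trans (by simp [hG])
  have htwo : μ.real two_large ≤ Fintype.card ι ^ 2 * G δ ^ 2 := by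
    refine (measureReal_biUnion_finset_le _ _).trans ?_
    rw [Finset.sum_congr rfl hpair, Finset.sum_const, nsmul_eq_mul]
    gcongr
    rw [Finset.offDiag_card, Finset.card_univ, sq]
    exact_mod_cast Nat.sub_le _ _
  calc _ ≤ μ.real (one_large ∪ two_large) := measureReal_mono hsub
    _ ≤ _ := (measureReal_union_le _ _).trans (add_le_add hone htwo)

end Probability

theorem few_large_jumps_independent_components_general
    {Ω : Type*} [MeasurableSpace Ω] (μ : Measure Ω) [IsProbabilityMeasure μ]
    (d n : ℕ) (hn : 0 < n) (α : ℝ) (κ : Fin d → ℝ)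
    (Z : Fin n → Ω → Fin d → ℝ)
    (hmeas : ∀ k, Measurable (Z k))
    (hnonneg : ∀ k ω j, 0 ≤ Z k ω j)
    (hindep : iIndepFun Z μ)
    (hident : ∀ k, Measure.map (Z k) μ = Measure.map (Z ⟨0, hn⟩) μ)
    (hcomp : ∀ k, iIndepFun
      (fun j ω => Z k ω j) μ)
    (b : ℝ → ℝ) (hbtop : Tendsto b atTop atTop)
    (hmarg : ∀ j : Fin d, ∀ x : ℝ, 0 < x →
      Tendsto (fun t : ℝ => t * (μ {ω | b t * x < Z ⟨0, hn⟩ ω j}).toReal)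
        atTop (nhds (κ j * x ^ (-α))))
    (hjoint : ∀ S : Finset (Fin d), 2 ≤ S.card → ∀ x : Fin d → ℝ, (∀ j ∈ S, 0 < x j) →
      Tendsto (fun t : ℝ =>
          t * (μ {ω | ∀ j ∈ S, (b t) ^ (((S.card : ℝ))⁻¹) * x j < Z ⟨0, hn⟩ ω j}).toReal)
        atTop (nhds (∏ j ∈ S, κ j * x j ^ (-α))))
    (i : ℕ) (hi : 1 ≤ i) (S : Finset (Fin d)) (hS : S.card = i)
    (x : Fin d → ℝ) (hx : ∀ j ∈ S, 0 < x j) :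
    Tendsto (fun t : ℝ =>
        t * (μ {ω | ∀ j ∈ S, (b t) ^ ((i : ℝ)⁻¹) * x j < ∑ k, Z k ω j}).toReal)
      atTop (nhds ((n : ℝ) ^ i * ∏ j ∈ S, κ j * x j ^ (-α))) := by
  subst hS
  have : Nonempty (Fin n) := ⟨⟨0, hn⟩⟩
  have htail : ∀ k j s, μ.real {ω | s < Z k ω j} = μ.real {ω | s < Z ⟨0, hn⟩ ω j} :=
    fun k => measureReal_lt_apply_eq_of_map_eq (hmeas k) (hmeas _) (hident k)
  have hcol : ∀ j, iIndepFun (fun k ω => Z k ω j) μ := fun j =>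
    hindep.comp (fun _ v => v j) fun _ => measurable_pi_apply j
  refine (tendsto_mul_prod_of_tail_bounds S hn hx (c := fun t => b t ^ ((S.card : ℝ)⁻¹))
    (F := fun j s => μ.real {ω | s < Z ⟨0, hn⟩ ω j})
    (G := fun j s => μ.real {ω | s < ∑ k, Z k ω j})
    ((tendsto_rpow_atTop (by positivity)).comp hbtop) (fun _ _ _ => measureReal_nonneg)
    (fun j _ => tendsto_measureReal_lt_atTop ((measurable_pi_apply j).comp (hmeas _)))
    (fun y hy => tendsto_mul_prod_measureReal_lt (hcomp _) hmarg hjoint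
      (Finset.card_pos.1 hi) hy)
    ((tendsto_prod_mul_rpow_one_sub_mul S κ x _ fun j hj => (hx j hj).ne').mono_left
      nhdsWithin_le_nhds)
    (fun j _ s => by
      simpa using mul_sub_sq_le_measureReal_lt_sum (fun k => (measurable_pi_apply j).comp
        (hmeas k)) (hcol j) (fun k ω => hnonneg k ω j) (fun k s => htail k j s) s)
    (fun j _ s δ hδ => by
      simpa using measureReal_lt_sum_le_s9 (hcol j) (fun k ω => hnonneg k ω j)
        (fun k s => htail k j s) hδ s)).congr fun t =>
    congrArg _ ((iIndepFun_sum_apply hmeas hindep hcomp).measureReal_forall_lt S _).symm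

/-- Few large jumps for sums of i.i.d. vectors with independent components:
if each marginal tail satisfies `t·P(Z_j > b(t)x) → κ_j x^{-α}` and joint exceedances
satisfy `t·P(Z_j > b(t)^{1/|S|} x_j ∀ j ∈ S) → Π_{j∈S} κ_j x_j^{-α}`, then the
`n`-fold sum satisfies
`t·P(Σ_k Z_j⁽ᵏ⁾ > b(t)^{1/i} x_j ∀ j ∈ S) → n^i Π_{j∈S} κ_j x_j^{-α}` for `|S| = i`. -/
theorem few_large_jumps_independent_components
    {Ω : Type*} [MeasurableSpace Ω] (μ : Measure Ω) [IsProbabilityMeasure μ]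
    (d n : ℕ) (hn : 0 < n) (α : ℝ) (hα : 0 < α) (κ : Fin d → ℝ) (hκ : ∀ j, 0 < κ j)
    (Z : Fin n → Ω → Fin d → ℝ)
    (hmeas : ∀ k, Measurable (Z k))
    (hnonneg : ∀ k ω j, 0 ≤ Z k ω j)
    (hindep : iIndepFun Z μ)
    (hident : ∀ k, Measure.map (Z k) μ = Measure.map (Z ⟨0, hn⟩) μ)
    (hcomp : ∀ k, iIndepFun
      (fun j ω => Z k ω j) μ)
    (b : ℝ → ℝ) (hbpos : ∀ t, 0 < b t) (hbtop : Tendsto b atTop atTop)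
    (hbrv : ∀ s : ℝ, 0 < s →
      Tendsto (fun t : ℝ => b (t * s) / b t) atTop (nhds (s ^ (α⁻¹))))
    (hmarg : ∀ j : Fin d, ∀ x : ℝ, 0 < x →
      Tendsto (fun t : ℝ => t * (μ {ω | b t * x < Z ⟨0, hn⟩ ω j}).toReal)
        atTop (nhds (κ j * x ^ (-α))))
    (hjoint : ∀ S : Finset (Fin d), 2 ≤ S.card → ∀ x : Fin d → ℝ, (∀ j ∈ S, 0 < x j) →
      Tendsto (fun t : ℝ =>
          t * (μ {ω | ∀ j ∈ S, (b t) ^ (((S.card : ℝ))⁻¹) * x j < Z ⟨0, hn⟩ ω j}).toReal)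
        atTop (nhds (∏ j ∈ S, κ j * x j ^ (-α))))
    (i : ℕ) (hi : 1 ≤ i) (S : Finset (Fin d)) (hS : S.card = i)
    (x : Fin d → ℝ) (hx : ∀ j ∈ S, 0 < x j) :
    Tendsto (fun t : ℝ =>
        t * (μ {ω | ∀ j ∈ S, (b t) ^ ((i : ℝ)⁻¹) * x j < ∑ k, Z k ω j}).toReal)
      atTop (nhds ((n : ℝ) ^ i * ∏ j ∈ S, κ j * x j ^ (-α))) :=
  few_large_jumps_independent_components_general μ d n hn α κ Z hmeas hnonneg hindep hident hcomp b
    hbtop hmarg hjoint i hi S hS x hx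
end
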